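/- arXiv:2501.10806 — 5 statements merged into one kernel-verified Lean document; each statement's English description precedes it below -/
import Mathlib

section
/- Let H₀ : ℝ^{d1} → ℝ be ρ-strongly concave and L-smooth, A ∈ ℝ^{d2×d1} with full row rank, and let x*(λ) be the unique solution of ∇H₀(x) = A^T λ. Then the map λ ↦ −A x*(λ) is strongly monotone with constant ρ/(L‖(AA^T)^{-1}A‖)². -/
open scoped InnerProductSpace

/-! Writing `xᵢ = x*(λᵢ)`, the identity `∇H₀(xᵢ) = Aᵀλᵢ` turns the pairing `⟪-A x₁ + A x₂, λ₁ - λ₂⟫`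
into the strong-concavity pairing `⟪∇H₀ x₂ - ∇H₀ x₁, x₁ - x₂⟫ ≥ ρ‖x₁ - x₂‖²`, while the left inverse
`B` of `Aᵀ` and the Lipschitz bound give `‖λ₁ - λ₂‖ ≤ L‖B‖‖x₁ - x₂‖`. -/

lemma div_sq_mul_sq_le_mul_sq_of_le_mul {a b c k : ℝ} (hc : 0 ≤ c) (ha : 0 ≤ a)
    (hab : a ≤ k * b) : c / k ^ 2 * a ^ 2 ≤ c * b ^ 2 := by
  have hsq : a ^ 2 ≤ k ^ 2 * b ^ 2 := by
    rw [← mul_pow]; exact pow_le_pow_left₀ ha hab 2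
  calc c / k ^ 2 * a ^ 2 ≤ c / k ^ 2 * (k ^ 2 * b ^ 2) := by gcongr
    _ = c * (k ^ 2 / k ^ 2) * b ^ 2 := by ring
    -- `k ^ 2 / k ^ 2` is `0` rather than `1` when `k = 0`
    _ ≤ c * 1 * b ^ 2 := by gcongr; exact div_self_le_one _
    _ = c * b ^ 2 := by ring

section Adjoint

variable {E F : Type*} [NormedAddCommGroup E] [InnerProductSpace ℝ E] [CompleteSpace E]
  [NormedAddCommGroup F] [InnerProductSpace ℝ F] [CompleteSpace F]

lemma inner_neg_add_map_sub_eq_inner_adjoint (A : E →L[ℝ] F) (x₁ x₂ : E) (y₁ y₂ : F) :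
    ⟪-(A x₁) + A x₂, y₁ - y₂⟫_ℝ =
      ⟪ContinuousLinearMap.adjoint A y₂ - ContinuousLinearMap.adjoint A y₁, x₁ - x₂⟫_ℝ := by
  rw [← map_sub, ContinuousLinearMap.adjoint_inner_left, real_inner_comm, map_sub,
    neg_add_eq_sub, ← neg_sub (A x₁), ← neg_sub y₂, inner_neg_neg]

lemma norm_sub_le_opNorm_mul_norm_adjoint_sub (A B : E →L[ℝ] F)
    (hB : ∀ y, B (ContinuousLinearMap.adjoint A y) = y) (y₁ y₂ : F) :
    ‖y₁ - y₂‖ ≤ ‖B‖ * ‖ContinuousLinearMap.adjoint A y₁ - ContinuousLinearMap.adjoint A y₂‖ := by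
  conv_lhs => rw [← hB y₁, ← hB y₂, ← map_sub]
  exact B.le_opNorm _

end Adjoint

theorem lagrangian_strongly_monotone_general
    {d1 d2 : ℕ}
    (H0 : EuclideanSpace ℝ (Fin d1) → ℝ)
    (ρ L : ℝ) (hρ : 0 < ρ)
    (hconc : ∀ x1 x2, ρ * ‖x1 - x2‖ ^ 2 ≤ ⟪gradient H0 x2 - gradient H0 x1, x1 - x2⟫_ℝ)
    (hlip : ∀ x1 x2, ‖gradient H0 x1 - gradient H0 x2‖ ≤ L * ‖x1 - x2‖)
    (A : EuclideanSpace ℝ (Fin d1) →L[ℝ] EuclideanSpace ℝ (Fin d2))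
    (B : EuclideanSpace ℝ (Fin d1) →L[ℝ] EuclideanSpace ℝ (Fin d2))
    (hB : ∀ lam, B (ContinuousLinearMap.adjoint A lam) = lam)
    (xs : EuclideanSpace ℝ (Fin d2) → EuclideanSpace ℝ (Fin d1))
    (hxs : ∀ lam, gradient H0 (xs lam) = ContinuousLinearMap.adjoint A lam) :
    ∀ lam1 lam2,
      (ρ / (L * ‖B‖) ^ 2) * ‖lam1 - lam2‖ ^ 2 ≤
        ⟪-(A (xs lam1)) + A (xs lam2), lam1 - lam2⟫_ℝ := by
  intro lam1 lam2
  have hdual : ‖lam1 - lam2‖ ≤ L * ‖B‖ * ‖xs lam1 - xs lam2‖ :=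
    calc ‖lam1 - lam2‖
        ≤ ‖B‖ * ‖gradient H0 (xs lam1) - gradient H0 (xs lam2)‖ := by
          rw [hxs, hxs]; exact norm_sub_le_opNorm_mul_norm_adjoint_sub A B hB lam1 lam2
      _ ≤ ‖B‖ * (L * ‖xs lam1 - xs lam2‖) := by gcongr; exact hlip _ _
      _ = L * ‖B‖ * ‖xs lam1 - xs lam2‖ := by ring
  calc (ρ / (L * ‖B‖) ^ 2) * ‖lam1 - lam2‖ ^ 2
      ≤ ρ * ‖xs lam1 - xs lam2‖ ^ 2 :=
        div_sq_mul_sq_le_mul_sq_of_le_mul hρ.le (norm_nonneg _) hdual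
    _ ≤ ⟪gradient H0 (xs lam2) - gradient H0 (xs lam1), xs lam1 - xs lam2⟫_ℝ := hconc _ _
    _ = ⟪-(A (xs lam1)) + A (xs lam2), lam1 - lam2⟫_ℝ := by
        rw [hxs, hxs, inner_neg_add_map_sub_eq_inner_adjoint]

theorem lagrangian_strongly_monotone
    {d1 d2 : ℕ}
    (H0 : EuclideanSpace ℝ (Fin d1) → ℝ)
    (ρ L : ℝ) (hρ : 0 < ρ) (hL : 0 < L)
    (hconc : ∀ x1 x2, ρ * ‖x1 - x2‖ ^ 2 ≤ ⟪gradient H0 x2 - gradient H0 x1, x1 - x2⟫_ℝ)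
    (hlip : ∀ x1 x2, ‖gradient H0 x1 - gradient H0 x2‖ ≤ L * ‖x1 - x2‖)
    (A : EuclideanSpace ℝ (Fin d1) →L[ℝ] EuclideanSpace ℝ (Fin d2))
    (hsurj : Function.Surjective A)
    (B : EuclideanSpace ℝ (Fin d1) →L[ℝ] EuclideanSpace ℝ (Fin d2))
    (hB : ∀ lam, B (ContinuousLinearMap.adjoint A lam) = lam)
    (xs : EuclideanSpace ℝ (Fin d2) → EuclideanSpace ℝ (Fin d1))
    (hxs : ∀ lam, gradient H0 (xs lam) = ContinuousLinearMap.adjoint A lam) :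
    ∀ lam1 lam2,
      (ρ / (L * ‖B‖) ^ 2) * ‖lam1 - lam2‖ ^ 2 ≤
        ⟪-(A (xs lam1)) + A (xs lam2), lam1 - lam2⟫_ℝ :=
  lagrangian_strongly_monotone_general H0 ρ L hρ hconc hlip A B hB xs hxs
end

section
/- Let H₀ : ℝ^{d1} → ℝ be ρ-strongly concave with Lipschitz gradient, X ⊆ ℝ^{d1} nonempty closed convex, A ∈ ℝ^{d2×d1}, and for each λ let x̂(λ) ∈ X be the unique point satisfying the variational characterization ⟨x − x̂(λ), ∇H₀(x̂(λ)) − A^T λ⟩ ≤ 0 for all x ∈ X. Then the map λ ↦ −A x̂(λ) is (ρ/‖A‖²)-co-coercive. -/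
/-!
Test the variational inequalities of `x̂(λ₁)` and `x̂(λ₂)` against each other and add them: the
operators `∇H₀ - Aᵀλ` are then monotone along `x̂(λ₁) - x̂(λ₂)`, so strong concavity gives
`ρ ‖x̂(λ₁) - x̂(λ₂)‖² ≤ ⟪-A x̂(λ₁) + A x̂(λ₂), λ₁ - λ₂⟫`. Finally
`‖A x̂(λ₁) - A x̂(λ₂)‖ ≤ ‖A‖ ‖x̂(λ₁) - x̂(λ₂)‖`.
-/

open scoped InnerProductSpace

section VariationalInequality

variable {E : Type*} [NormedAddCommGroup E] [InnerProductSpace ℝ E]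

lemma inner_sub_nonneg_of_variational_inequalities {x y u v : E}
    (hx : ⟪y - x, u⟫_ℝ ≤ 0) (hy : ⟪x - y, v⟫_ℝ ≤ 0) : 0 ≤ ⟪u - v, x - y⟫_ℝ := by
  have hyx : y - x = -(x - y) := (neg_sub x y).symm
  rw [hyx, inner_neg_left, real_inner_comm] at hx
  rw [inner_sub_left]
  linarith [real_inner_comm (x - y) v]

end VariationalInequality

lemma ContinuousLinearMap.norm_apply_sq_div_opNorm_sq_le {E F : Type*}
    [SeminormedAddCommGroup E] [SeminormedAddCommGroup F] [NormedSpace ℝ E] [NormedSpace ℝ F]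
    (A : E →L[ℝ] F) (z : E) : ‖A z‖ ^ 2 / ‖A‖ ^ 2 ≤ ‖z‖ ^ 2 :=
  div_le_of_le_mul₀ (by positivity) (by positivity) <| by
    rw [← mul_pow, mul_comm]
    exact pow_le_pow_left₀ (norm_nonneg _) (A.le_opNorm z) 2

theorem projected_lagrangian_cocoercive_general
    {d1 d2 : ℕ}
    (H0 : EuclideanSpace ℝ (Fin d1) → ℝ)
    (ρ : ℝ) (hρ : 0 < ρ)
    (hconc : ∀ x1 x2, ρ * ‖x1 - x2‖ ^ 2 ≤ ⟪gradient H0 x2 - gradient H0 x1, x1 - x2⟫_ℝ)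
    (X : Set (EuclideanSpace ℝ (Fin d1)))
    (A : EuclideanSpace ℝ (Fin d1) →L[ℝ] EuclideanSpace ℝ (Fin d2))
    (xhat : EuclideanSpace ℝ (Fin d2) → EuclideanSpace ℝ (Fin d1))
    (hmem : ∀ lam, xhat lam ∈ X)
    (hvi : ∀ lam, ∀ x ∈ X,
      ⟪x - xhat lam, gradient H0 (xhat lam) - ContinuousLinearMap.adjoint A lam⟫_ℝ ≤ 0) :
    ∀ lam1 lam2,
      (ρ / ‖A‖ ^ 2) * ‖A (xhat lam1) - A (xhat lam2)‖ ^ 2 ≤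
        ⟪-(A (xhat lam1)) + A (xhat lam2), lam1 - lam2⟫_ℝ := by
  intro lam1 lam2
  set x1 := xhat lam1
  set x2 := xhat lam2
  have hmono := inner_sub_nonneg_of_variational_inequalities
    (hvi lam1 x2 (hmem lam2)) (hvi lam2 x1 (hmem lam1))
  have hsplit : ⟪(gradient H0 x1 - ContinuousLinearMap.adjoint A lam1) -
        (gradient H0 x2 - ContinuousLinearMap.adjoint A lam2), x1 - x2⟫_ℝ =
      ⟪-(A x1) + A x2, lam1 - lam2⟫_ℝ - ⟪gradient H0 x2 - gradient H0 x1, x1 - x2⟫_ℝ := by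
    simp only [inner_sub_left, inner_sub_right, inner_add_left, inner_neg_left,
      ContinuousLinearMap.adjoint_inner_left, real_inner_comm (A _)]
    ring
  have hstrong : ρ * ‖x1 - x2‖ ^ 2 ≤ ⟪-(A x1) + A x2, lam1 - lam2⟫_ℝ := by
    linarith [hconc x1 x2]
  calc (ρ / ‖A‖ ^ 2) * ‖A x1 - A x2‖ ^ 2 = ρ * (‖A (x1 - x2)‖ ^ 2 / ‖A‖ ^ 2) := by
        rw [map_sub]; ring
    _ ≤ ρ * ‖x1 - x2‖ ^ 2 := by gcongr; exact A.norm_apply_sq_div_opNorm_sq_le _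
    _ ≤ _ := hstrong

theorem projected_lagrangian_cocoercive
    {d1 d2 : ℕ}
    (H0 : EuclideanSpace ℝ (Fin d1) → ℝ)
    (ρ : ℝ) (hρ : 0 < ρ)
    (hconc : ∀ x1 x2, ρ * ‖x1 - x2‖ ^ 2 ≤ ⟪gradient H0 x2 - gradient H0 x1, x1 - x2⟫_ℝ)
    (X : Set (EuclideanSpace ℝ (Fin d1)))
    (hXne : X.Nonempty) (hXcl : IsClosed X) (hXcv : Convex ℝ X)
    (A : EuclideanSpace ℝ (Fin d1) →L[ℝ] EuclideanSpace ℝ (Fin d2))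
    (xhat : EuclideanSpace ℝ (Fin d2) → EuclideanSpace ℝ (Fin d1))
    (hmem : ∀ lam, xhat lam ∈ X)
    (hvi : ∀ lam, ∀ x ∈ X,
      ⟪x - xhat lam, gradient H0 (xhat lam) - ContinuousLinearMap.adjoint A lam⟫_ℝ ≤ 0) :
    ∀ lam1 lam2,
      (ρ / ‖A‖ ^ 2) * ‖A (xhat lam1) - A (xhat lam2)‖ ^ 2 ≤
        ⟪-(A (xhat lam1)) + A (xhat lam2), lam1 - lam2⟫_ℝ :=
  projected_lagrangian_cocoercive_general H0 ρ hρ hconc X A xhat hmem hvi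
end

section
/- Let p_i = h(z_i) − z_i where h is non-expansive and z_{i+1} = z_i + β_i(p_i + e_{i+1}) with 0 < β_i ≤ 1/2. Then ‖p_{i+1}‖² ≤ ‖p_i‖² + 2β_i‖e_{i+1}‖². -/
/-!
Write `p = h z - z` and `z' = z + β • (p + e)`. Then `h z' - z' = (h z' - h z) + (1 - β) • y`
with `y = p - (β / (1 - β)) • e`, and non-expansiveness bounds the first term by `β ‖x‖`,
`x = p + e`. Hence `‖h z' - z'‖` is at most the convex combination `β ‖x‖ + (1 - β) ‖y‖`, whose
square is at most `β ‖x‖² + (1 - β) ‖y‖²`. In an inner product space this equals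
`‖β • x + (1 - β) • y‖² + β (1 - β) ‖x - y‖² = ‖p‖² + β / (1 - β) ‖e‖²`,
and `β / (1 - β) ≤ 2 β` once `β ≤ 1 / 2`.
-/

section InnerProductSpace

variable {E : Type*} [NormedAddCommGroup E] [InnerProductSpace ℝ E]

theorem smul_norm_sq_add_smul_norm_sq {a b : ℝ} (hab : a + b = 1) (x y : E) :
    a * ‖x‖ ^ 2 + b * ‖y‖ ^ 2 = ‖a • x + b • y‖ ^ 2 + a * b * ‖x - y‖ ^ 2 := by
  obtain rfl := eq_sub_of_add_eq' hab
  simp only [← real_inner_self_eq_norm_sq, inner_add_left, inner_add_right, inner_sub_left,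
    inner_sub_right, real_inner_smul_left, real_inner_smul_right, real_inner_comm x y]
  ring

theorem norm_sq_residual_step_le {h : E → E} (hh : LipschitzWith 1 h) {z e : E} {β : ℝ}
    (hβ0 : 0 ≤ β) (hβ1 : β < 1) :
    ‖h (z + β • (h z - z + e)) - (z + β • (h z - z + e))‖ ^ 2 ≤
      ‖h z - z‖ ^ 2 + β / (1 - β) * ‖e‖ ^ 2 := by
  set p := h z - z
  set z' := z + β • (p + e)
  set x := p + e
  set y := p - (β / (1 - β)) • e
  have hβ1' : 0 < 1 - β := sub_pos.2 hβ1
  have hy : (1 - β) • y = (1 - β) • p - β • e := by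
    rw [smul_sub, smul_smul, mul_div_cancel₀ _ hβ1'.ne']
  have hresidual : h z' - z' = (h z' - h z) + (1 - β) • y := by
    rw [hy]; module
  have hcomb : β • x + (1 - β) • y = p := by
    rw [hy]; module
  have hdiff : (1 - β) • (x - y) = e := by
    rw [smul_sub, hy]; module
  have hstep : ‖h z' - h z‖ ≤ β * ‖x‖ := by
    calc ‖h z' - h z‖ ≤ ‖z' - z‖ := by simpa using hh.norm_sub_le z' z
      _ = β * ‖x‖ := by rw [add_sub_cancel_left, norm_smul, Real.norm_of_nonneg hβ0]
  have htri : ‖h z' - z'‖ ≤ β * ‖x‖ + (1 - β) * ‖y‖ := by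
    rw [hresidual]
    refine (norm_add_le _ _).trans ?_
    rw [norm_smul, Real.norm_of_nonneg hβ1'.le]
    gcongr
  have hconvex : (β * ‖x‖ + (1 - β) * ‖y‖) ^ 2 ≤ β * ‖x‖ ^ 2 + (1 - β) * ‖y‖ ^ 2 :=
    (even_two.convexOn_pow (𝕜 := ℝ)).2 trivial trivial hβ0 hβ1'.le (by ring)
  have hnorm_diff : ‖x - y‖ = ‖e‖ / (1 - β) := by
    rw [← hdiff, norm_smul, Real.norm_of_nonneg hβ1'.le, mul_div_cancel_left₀ _ hβ1'.ne']
  calc ‖h z' - z'‖ ^ 2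
      ≤ (β * ‖x‖ + (1 - β) * ‖y‖) ^ 2 := pow_le_pow_left₀ (norm_nonneg _) htri 2
    _ ≤ β * ‖x‖ ^ 2 + (1 - β) * ‖y‖ ^ 2 := hconvex
    _ = ‖p‖ ^ 2 + β / (1 - β) * ‖e‖ ^ 2 := by
      rw [smul_norm_sq_add_smul_norm_sq (by ring), hcomb, hnorm_diff]
      field_simp

end InnerProductSpace

theorem km_residual_decrease
    {d : ℕ} (h : EuclideanSpace ℝ (Fin d) → EuclideanSpace ℝ (Fin d))
    (hne : ∀ a b, ‖h a - h b‖ ≤ ‖a - b‖)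
    (z e : ℕ → EuclideanSpace ℝ (Fin d)) (β : ℕ → ℝ)
    (hβ0 : ∀ i, 0 < β i) (hβ1 : ∀ i, β i ≤ 1 / 2)
    (hupd : ∀ i, z (i + 1) = z i + β i • (h (z i) - z i + e (i + 1))) :
    ∀ i, ‖h (z (i + 1)) - z (i + 1)‖ ^ 2 ≤
      ‖h (z i) - z i‖ ^ 2 + 2 * β i * ‖e (i + 1)‖ ^ 2 := by
  intro i
  have hh : LipschitzWith 1 h := lipschitzWith_iff_norm_sub_le.2 (by simpa using hne)
  have hpos := hβ0 i
  have hhalf := hβ1 i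
  have hcoeff : β i / (1 - β i) ≤ 2 * β i := by
    rw [div_le_iff₀ (by linarith)]
    nlinarith
  rw [hupd i]
  calc _ ≤ ‖h (z i) - z i‖ ^ 2 + β i / (1 - β i) * ‖e (i + 1)‖ ^ 2 :=
        norm_sq_residual_step_le hh hpos.le (by linarith)
    _ ≤ _ := by gcongr
end

section
/- Let α_k = α/(k+K)^a and β_k = β/(k+K)^b with 1/2 < a < b < 1, 2b ≥ 3a, and K ≥ 1. Then the double sum Σ_{i=0}^{k} β_i Σ_{j=i}^{k−1} β_j α_j is bounded above by a constant independent of k; specifically it is at most (2αβ²/(a+b−1)) · Σ_{i=0}^{∞} (i+1)^{−(4a−1)} < ∞. -/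
/-!
Each product `βⱼ αⱼ = α β (j + K)^(-(a+b))`, and comparing with `∫ t^(-(a+b)) dt` bounds the
inner sum by `2 (i + K)^(1-(a+b)) / (a + b - 1)`. Multiplying by `βᵢ` leaves the power
`(i + K)^(-(a+2b-1)) ≤ (i + 1)^(-(4a-1))` (as `2b ≥ 3a`), and `4a - 1 > 1` makes the outer sum
converge.
-/

open Finset Real

lemma sum_range_add_succ_rpow_neg_le {x p : ℝ} (hx : 0 < x) (hp : 1 < p) (n : ℕ) :
    ∑ i ∈ range n, (x + ↑(i + 1)) ^ (-p) ≤ x ^ (1 - p) / (p - 1) := by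
  have hanti : AntitoneOn (fun t : ℝ ↦ t ^ (-p)) (Set.Icc x (x + n)) :=
    fun s hs t _ hst ↦ rpow_le_rpow_of_nonpos (hx.trans_le hs.1) hst (by linarith)
  have hzero : (0 : ℝ) ∉ Set.uIcc x (x + n) := by
    rw [Set.uIcc_of_le (by simp)]
    exact fun h ↦ hx.not_ge h.1
  calc ∑ i ∈ range n, (x + ↑(i + 1)) ^ (-p)
      ≤ ∫ t in x..x + n, t ^ (-p) := hanti.sum_le_integral (f := fun t ↦ t ^ (-p))
    _ = (x ^ (1 - p) - (x + n) ^ (1 - p)) / (p - 1) := by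
      rw [integral_rpow (Or.inr ⟨by linarith, hzero⟩), neg_add_eq_sub, ← neg_sub p 1,
        div_neg, ← neg_div, neg_sub]
    _ ≤ x ^ (1 - p) / (p - 1) :=
      div_le_div_of_nonneg_right (sub_le_self _ (by positivity)) (by linarith)

lemma sum_range_add_rpow_neg_le {x p : ℝ} (hx : 1 ≤ x) (hp₁ : 1 < p) (hp₂ : p ≤ 2) (n : ℕ) :
    ∑ i ∈ range n, (x + i) ^ (-p) ≤ 2 * x ^ (1 - p) / (p - 1) := by
  have hx₀ : 0 < x := one_pos.trans_le hx
  have hfirst : x ^ (-p) ≤ x ^ (1 - p) / (p - 1) :=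
    (rpow_le_rpow_of_exponent_le hx (by linarith)).trans
      (le_div_self (by positivity) (by linarith) (by linarith))
  cases n with
  | zero =>
    rw [range_zero, sum_empty]
    positivity
  | succ n =>
    rw [sum_range_succ', Nat.cast_zero, add_zero]
    have htail := sum_range_add_succ_rpow_neg_le hx₀ hp₁ n
    calc ∑ i ∈ range n, (x + ↑(i + 1)) ^ (-p) + x ^ (-p)
        ≤ x ^ (1 - p) / (p - 1) + x ^ (1 - p) / (p - 1) := add_le_add htail hfirst
      _ = 2 * x ^ (1 - p) / (p - 1) := by ring

lemma sum_Ico_natCast_add_rpow_neg_le {K p : ℝ} (hK : 1 ≤ K) (hp₁ : 1 < p) (hp₂ : p ≤ 2)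
    (i k : ℕ) :
    ∑ j ∈ Ico i k, ((j : ℝ) + K) ^ (-p) ≤ 2 * ((i : ℝ) + K) ^ (1 - p) / (p - 1) := by
  rw [sum_Ico_eq_sum_range]
  have hx : 1 ≤ (i : ℝ) + K := le_add_of_nonneg_of_le i.cast_nonneg hK
  convert sum_range_add_rpow_neg_le hx hp₁ hp₂ (k - i) using 3 with l
  push_cast
  ring

lemma natCast_add_rpow_neg_mul_sum_Ico_le {a b K : ℝ} (ha : 1 / 2 < a) (hb : b < 1)
    (h2b3a : 3 * a ≤ 2 * b) (hK : 1 ≤ K) (i k : ℕ) :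
    ((i : ℝ) + K) ^ (-b) * ∑ j ∈ Ico i k, ((j : ℝ) + K) ^ (-(a + b)) ≤
      2 / (a + b - 1) * ((i : ℝ) + 1) ^ (-(4 * a - 1)) := by
  have hx : 1 ≤ (i : ℝ) + K := le_add_of_nonneg_of_le i.cast_nonneg hK
  have hexp : ((i : ℝ) + K) ^ (-b) * ((i : ℝ) + K) ^ (1 - (a + b)) =
      ((i : ℝ) + K) ^ (-(a + 2 * b - 1)) := by
    rw [← rpow_add (by positivity)]
    ring_nf
  calc ((i : ℝ) + K) ^ (-b) * ∑ j ∈ Ico i k, ((j : ℝ) + K) ^ (-(a + b))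
      ≤ ((i : ℝ) + K) ^ (-b) * (2 * ((i : ℝ) + K) ^ (1 - (a + b)) / (a + b - 1)) := by
        gcongr
        exact sum_Ico_natCast_add_rpow_neg_le hK (by linarith) (by linarith) i k
    _ = 2 / (a + b - 1) * ((i : ℝ) + K) ^ (-(a + 2 * b - 1)) := by
        rw [← hexp]
        ring
    _ ≤ 2 / (a + b - 1) * ((i : ℝ) + 1) ^ (-(4 * a - 1)) := by
        have : 0 < a + b - 1 := by linarith
        gcongr
        exact (rpow_le_rpow_of_nonpos (by positivity) (by linarith) (by linarith)).trans
          (rpow_le_rpow_of_exponent_le (by linarith) (by linarith))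

lemma summable_natCast_add_one_rpow_neg {p : ℝ} (hp : 1 < p) :
    Summable fun i : ℕ ↦ ((i : ℝ) + 1) ^ (-p) := by
  refine ((summable_nat_add_iff 1).2 (summable_nat_rpow.2 (by linarith : -p < -1))).congr
    fun i ↦ ?_
  push_cast
  rfl

theorem double_sum_stepsize_bound_general
    (α β a b K : ℝ) (ha : 1 / 2 < a) (hb : b < 1)
    (h2b3a : 3 * a ≤ 2 * b) (hK : 1 ≤ K) (hα : 0 < α)
    (αs βs : ℕ → ℝ)
    (hαs : ∀ i : ℕ, αs i = α / ((i : ℝ) + K) ^ a)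
    (hβs : ∀ i : ℕ, βs i = β / ((i : ℝ) + K) ^ b) :
    ∀ k : ℕ, ∑ i ∈ range (k + 1), βs i * ∑ j ∈ Ico i k, βs j * αs j ≤
      (2 * α * β ^ 2 / (a + b - 1)) * ∑' i : ℕ, ((i : ℝ) + 1) ^ (-(4 * a - 1)) := by
  intro k
  have hpos (i : ℕ) : 0 < (i : ℝ) + K := by positivity
  have hprod (j : ℕ) : βs j * αs j = α * β * ((j : ℝ) + K) ^ (-(a + b)) := by
    rw [hβs, hαs, div_mul_div_comm, ← rpow_add (hpos j), add_comm b a, rpow_neg (hpos j).le]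
    ring
  have hterm (i : ℕ) : βs i * ∑ j ∈ Ico i k, βs j * αs j ≤
      2 * α * β ^ 2 / (a + b - 1) * ((i : ℝ) + 1) ^ (-(4 * a - 1)) := by
    calc βs i * ∑ j ∈ Ico i k, βs j * αs j
        = α * β ^ 2 * (((i : ℝ) + K) ^ (-b) * ∑ j ∈ Ico i k, ((j : ℝ) + K) ^ (-(a + b))) := by
          rw [sum_congr rfl fun j _ ↦ hprod j, ← mul_sum, hβs i, rpow_neg (hpos i).le]
          ring
      _ ≤ α * β ^ 2 * (2 / (a + b - 1) * ((i : ℝ) + 1) ^ (-(4 * a - 1))) :=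
          mul_le_mul_of_nonneg_left (natCast_add_rpow_neg_mul_sum_Ico_le ha hb h2b3a hK i k)
            (by positivity)
      _ = _ := by ring
  have hC : 0 ≤ 2 * α * β ^ 2 / (a + b - 1) := by
    have : 0 < a + b - 1 := by linarith
    positivity
  calc ∑ i ∈ range (k + 1), βs i * ∑ j ∈ Ico i k, βs j * αs j
      ≤ 2 * α * β ^ 2 / (a + b - 1) * ∑ i ∈ range (k + 1), ((i : ℝ) + 1) ^ (-(4 * a - 1)) := by
        rw [mul_sum]
        exact sum_le_sum fun i _ ↦ hterm i
    _ ≤ _ := mul_le_mul_of_nonneg_left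
        ((summable_natCast_add_one_rpow_neg (by linarith)).sum_le_tsum _ fun i _ ↦ by positivity)
        hC

theorem double_sum_stepsize_bound
    (α β a b K : ℝ) (ha : 1 / 2 < a) (hab : a < b) (hb : b < 1)
    (h2b3a : 3 * a ≤ 2 * b) (hK : 1 ≤ K) (hα : 0 < α) (hβ : 0 < β)
    (αs βs : ℕ → ℝ)
    (hαs : ∀ i : ℕ, αs i = α / ((i : ℝ) + K) ^ a)
    (hβs : ∀ i : ℕ, βs i = β / ((i : ℝ) + K) ^ b) :
    ∀ k : ℕ, ∑ i ∈ range (k + 1), βs i * ∑ j ∈ Ico i k, βs j * αs j ≤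
      (2 * α * β ^ 2 / (a + b - 1)) * ∑' i : ℕ, ((i : ℝ) + 1) ^ (-(4 * a - 1)) :=
  double_sum_stepsize_bound_general α β a b K ha hb h2b3a hK hα αs βs hαs hβs
end

section
/- Let M'_i be a martingale difference sequence with E[‖M'_{i+1}‖² | F_i] ≤ D for a constant D, and define U_0 = 0, U_{k+1} = (1−β_k)U_k + β_k M'_{k+1}, where β_k = β/(k+K)^b with 0 < b < 1, β ≤ 1/2 and K ≥ (2b/β)^{1/(1−b)}. Then E[‖U_k‖²] ≤ 2D β_k for all k. -/
open MeasureTheory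

open scoped InnerProductSpace

/-!
Expanding the square, `‖U_{k+1}‖² = (1-β_k)²‖U_k‖² + 2(1-β_k)β_k⟪U_k, M'_{k+1}⟫ + β_k²‖M'_{k+1}‖²`,
and the cross term has zero mean because `U_k` is `F_k`-measurable while `M'_{k+1}` has zero
conditional expectation given `F_k`. Hence `e_k = E‖U_k‖²` satisfies
`e_{k+1} ≤ (1-β_k)² e_k + β_k² D`, and `e_k ≤ 2Dβ_k` follows by induction as soon as
`β_k ≤ 1` and `2β_k - β_k² ≤ 2β_{k+1}`. The latter says `β_k - β_{k+1} ≤ β_k²/2`; by Bernoulli's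
inequality `(x+1)^b ≤ x^b (1 + b/x)` this reduces, for `x = k + K`, to `2b x^b ≤ β x`,
i.e. `x^{1-b} ≥ 2b/β`, which is the choice of `K`; combined with `(2b)^b ≥ 1/2 ≥ β` it also
gives `β_k ≤ 1`.
-/

section StepSize

lemma half_le_two_mul_rpow_self {b : ℝ} (hb0 : 0 < b) (hb1 : b ≤ 1) : 1 / 2 ≤ (2 * b) ^ b := by
  have bernoulli : (2 * b)⁻¹ ^ b ≤ 1 + b * ((2 * b)⁻¹ - 1) := by
    simpa using rpow_one_add_le_one_add_mul_self (s := (2 * b)⁻¹ - 1)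
      (by linarith [inv_pos.2 (by positivity : (0 : ℝ) < 2 * b)]) hb0.le hb1
  have hexp : b * ((2 * b)⁻¹ - 1) = 1 / 2 - b := by field_simp
  rw [Real.inv_rpow (by positivity), hexp] at bernoulli
  rw [one_div]
  exact (inv_le_comm₀ (by positivity) two_pos).1 (by linarith)

variable {β b x : ℝ}

lemma le_rpow_of_div_le_rpow_one_sub (hb0 : 0 < b) (hb1 : b < 1) (hβ0 : 0 < β) (hβ : β ≤ 1 / 2)
    (hx0 : 0 ≤ x) (hc : 2 * b / β ≤ x ^ (1 - b)) : β ≤ x ^ b := by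
  rw [← Real.rpow_le_rpow_iff hβ0.le (Real.rpow_nonneg hx0 _) (by linarith : 0 < 1 - b),
    ← Real.rpow_mul hx0, mul_comm, Real.rpow_mul hx0]
  calc β ^ (1 - b) = β / β ^ b := by rw [Real.rpow_sub hβ0, Real.rpow_one]
    _ ≤ (2 * b) ^ b / β ^ b := by gcongr; linarith [half_le_two_mul_rpow_self hb0 hb1.le]
    _ = (2 * b / β) ^ b := (Real.div_rpow (by positivity) hβ0.le _).symm
    _ ≤ (x ^ (1 - b)) ^ b := by gcongr

lemma two_mul_mul_rpow_le (hβ0 : 0 < β) (hx0 : 0 < x)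
    (hc : 2 * b / β ≤ x ^ (1 - b)) : 2 * b * x ^ b ≤ β * x :=
  calc 2 * b * x ^ b = β * (2 * b / β) * x ^ b := by field_simp
    _ ≤ β * x ^ (1 - b) * x ^ b := by gcongr
    _ = β * x := by rw [mul_assoc, ← Real.rpow_add hx0, sub_add_cancel, Real.rpow_one]

lemma rpow_add_one_le (hx : 0 < x) (hb0 : 0 ≤ b) (hb1 : b ≤ 1) :
    (x + 1) ^ b ≤ x ^ b * (1 + b / x) := by
  have hsplit : x + 1 = x * (1 + 1 / x) := by field_simp
  rw [hsplit, Real.mul_rpow hx.le (by positivity), div_eq_mul_one_div b x]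
  gcongr
  exact rpow_one_add_le_one_add_mul_self (by linarith [one_div_pos.2 hx]) hb0 hb1

lemma two_mul_div_rpow_sub_sq_le_of_le (hx : 0 < x) (hb0 : 0 ≤ b) (hb1 : b ≤ 1) (hβ0 : 0 < β)
    (h : 2 * b * x ^ b ≤ β * x) :
    2 * (β / x ^ b) - (β / x ^ b) ^ 2 ≤ 2 * (β / (x + 1) ^ b) := by
  have hxb : 0 < x ^ b := by positivity
  have hgap : 2 * (β / (x ^ b * (1 + b / x))) - (2 * (β / x ^ b) - (β / x ^ b) ^ 2) =
      β * (β * (x + b) - 2 * b * x ^ b) / ((x ^ b) ^ 2 * (x + b)) := by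
    field_simp
    ring
  have hgap_nonneg : 0 ≤ β * (β * (x + b) - 2 * b * x ^ b) / ((x ^ b) ^ 2 * (x + b)) :=
    div_nonneg (mul_nonneg hβ0.le (by nlinarith)) (by positivity)
  calc 2 * (β / x ^ b) - (β / x ^ b) ^ 2 ≤ 2 * (β / (x ^ b * (1 + b / x))) := by linarith
    _ ≤ 2 * (β / (x + 1) ^ b) := by gcongr; exact rpow_add_one_le hx hb0 hb1

lemma pos_and_div_le_rpow_one_sub (hb0 : 0 < b) (hb1 : b < 1) (hβ0 : 0 < β)
    (hx : (2 * b / β) ^ (1 / (1 - b)) ≤ x) : 0 < x ∧ 2 * b / β ≤ x ^ (1 - b) := by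
  have hx0 : 0 < x := (Real.rpow_pos_of_pos (by positivity) _).trans_le hx
  refine ⟨hx0, ?_⟩
  rwa [← Real.rpow_inv_le_iff_of_pos (by positivity) hx0.le (by linarith), ← one_div]

lemma div_rpow_mem_Icc (hb0 : 0 < b) (hb1 : b < 1) (hβ0 : 0 < β) (hβ : β ≤ 1 / 2)
    (hx : (2 * b / β) ^ (1 / (1 - b)) ≤ x) : β / x ^ b ∈ Set.Icc 0 1 := by
  obtain ⟨hx0, hc⟩ := pos_and_div_le_rpow_one_sub hb0 hb1 hβ0 hx
  exact ⟨by positivity, div_le_one_of_le₀ (le_rpow_of_div_le_rpow_one_sub hb0 hb1 hβ0 hβ hx0.le hc)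
    (by positivity)⟩

lemma two_mul_div_rpow_sub_sq_le (hb0 : 0 < b) (hb1 : b < 1) (hβ0 : 0 < β)
    (hx : (2 * b / β) ^ (1 / (1 - b)) ≤ x) :
    2 * (β / x ^ b) - (β / x ^ b) ^ 2 ≤ 2 * (β / (x + 1) ^ b) := by
  obtain ⟨hx0, hc⟩ := pos_and_div_le_rpow_one_sub hb0 hb1 hβ0 hx
  exact two_mul_div_rpow_sub_sq_le_of_le hx0 hb0.le hb1.le hβ0 (two_mul_mul_rpow_le hβ0 hx0 hc)

end StepSize

section SecondMoment

variable {Ω E : Type*} {m m0 : MeasurableSpace Ω} {μ : Measure Ω}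
  [NormedAddCommGroup E] [InnerProductSpace ℝ E]

lemma norm_smul_add_smul_sq (a c : ℝ) (u v : E) :
    ‖a • u + c • v‖ ^ 2 = a ^ 2 * ‖u‖ ^ 2 + 2 * a * c * ⟪u, v⟫_ℝ + c ^ 2 * ‖v‖ ^ 2 := by
  rw [norm_add_sq_real, norm_smul, norm_smul, real_inner_smul_left, real_inner_smul_right,
    mul_pow, mul_pow, Real.norm_eq_abs, Real.norm_eq_abs, sq_abs, sq_abs]
  ring

lemma integrable_inner_of_integrable_norm_sq {f g : Ω → E} (hf : AEStronglyMeasurable f μ)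
    (hg : AEStronglyMeasurable g μ) (hf2 : Integrable (fun ω => ‖f ω‖ ^ 2) μ)
    (hg2 : Integrable (fun ω => ‖g ω‖ ^ 2) μ) : Integrable (fun ω => ⟪f ω, g ω⟫_ℝ) μ := by
  refine ((hf2.add hg2).div_const 2).mono' (hf.inner hg) (ae_of_all _ fun ω => ?_)
  have := norm_inner_le_norm (𝕜 := ℝ) (f ω) (g ω)
  simp only [Pi.add_apply]
  nlinarith [sq_nonneg (‖f ω‖ - ‖g ω‖)]

lemma integrable_norm_sq_smul_add_smul (a c : ℝ) {u v : Ω → E} (hu : AEStronglyMeasurable u μ)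
    (hv : AEStronglyMeasurable v μ) (hu2 : Integrable (fun ω => ‖u ω‖ ^ 2) μ)
    (hv2 : Integrable (fun ω => ‖v ω‖ ^ 2) μ) :
    Integrable (fun ω => ‖a • u ω + c • v ω‖ ^ 2) μ := by
  simp_rw [norm_smul_add_smul_sq]
  exact ((hu2.const_mul _).add
    ((integrable_inner_of_integrable_norm_sq hu hv hu2 hv2).const_mul _)).add (hv2.const_mul _)

lemma integral_inner_eq_zero_of_condExp_eq_zero [CompleteSpace E] (hm : m ≤ m0)
    [SigmaFinite (μ.trim hm)] {f g : Ω → E} (hf : StronglyMeasurable[m] f)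
    (hfg : Integrable (fun ω => ⟪f ω, g ω⟫_ℝ) μ) (hg : Integrable g μ)
    (hg0 : μ[g | m] =ᵐ[μ] 0) : ∫ ω, ⟪f ω, g ω⟫_ℝ ∂μ = 0 := by
  rw [← integral_condExp hm]
  refine integral_eq_zero_of_ae ?_
  filter_upwards [condExp_bilin_of_stronglyMeasurable_left (innerSL ℝ) hf hfg hg, hg0]
    with ω hpull hzero
  exact hpull.trans (by simp [hzero])

lemma integral_norm_sq_smul_add_smul [CompleteSpace E] (hm : m ≤ m0) [SigmaFinite (μ.trim hm)]
    (a c : ℝ) {u v : Ω → E} (hu : StronglyMeasurable[m] u)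
    (hu2 : Integrable (fun ω => ‖u ω‖ ^ 2) μ) (hv : Integrable v μ)
    (hv2 : Integrable (fun ω => ‖v ω‖ ^ 2) μ) (hv0 : μ[v | m] =ᵐ[μ] 0) :
    ∫ ω, ‖a • u ω + c • v ω‖ ^ 2 ∂μ =
      a ^ 2 * ∫ ω, ‖u ω‖ ^ 2 ∂μ + c ^ 2 * ∫ ω, ‖v ω‖ ^ 2 ∂μ := by
  have huv := integrable_inner_of_integrable_norm_sq (hu.mono hm).aestronglyMeasurable
    hv.aestronglyMeasurable hu2 hv2
  simp_rw [norm_smul_add_smul_sq]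
  rw [integral_add ?_ (hv2.const_mul _), integral_add (hu2.const_mul _) (huv.const_mul _),
    integral_const_mul, integral_const_mul, integral_const_mul,
    integral_inner_eq_zero_of_condExp_eq_zero hm hu huv hv hv0, mul_zero, add_zero]
  exact (hu2.const_mul _).add (huv.const_mul _)

lemma stronglyMeasurable_and_integrable_norm_sq_of_averaging (ℱ : Filtration ℕ m0)
    {a : ℕ → ℝ} {M U : ℕ → Ω → E}
    (hM : ∀ k, StronglyMeasurable[ℱ (k + 1)] (M (k + 1)))
    (hM2 : ∀ k, Integrable (fun ω => ‖M (k + 1) ω‖ ^ 2) μ) (hU0 : U 0 = 0)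
    (hU : ∀ k, U (k + 1) = fun ω => (1 - a k) • U k ω + a k • M (k + 1) ω) (k : ℕ) :
    StronglyMeasurable[ℱ k] (U k) ∧ Integrable (fun ω => ‖U k ω‖ ^ 2) μ := by
  induction k with
  | zero => simp [hU0, stronglyMeasurable_zero]
  | succ k ih =>
    rw [hU]
    exact ⟨((ih.1.mono (ℱ.mono k.le_succ)).const_smul (1 - a k)).add ((hM k).const_smul (a k)),
      integrable_norm_sq_smul_add_smul _ _ (ih.1.mono (ℱ.le k)).aestronglyMeasurable
        ((hM k).mono (ℱ.le _)).aestronglyMeasurable ih.2 (hM2 k)⟩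

lemma integral_le_of_condExp_le [IsProbabilityMeasure μ] (hm : m ≤ m0) {f : Ω → ℝ} {D : ℝ}
    (hD : ∀ᵐ ω ∂μ, μ[f | m] ω ≤ D) : ∫ ω, f ω ∂μ ≤ D := by
  rw [← integral_condExp hm]
  simpa using integral_mono_ae integrable_condExp (integrable_const D) hD

end SecondMoment

lemma le_two_mul_of_second_moment_recursion {e s : ℕ → ℝ} {D : ℝ} (hD : 0 ≤ D) (he0 : e 0 = 0)
    (hs : ∀ k, s k ∈ Set.Icc 0 1) (hstep : ∀ k, 2 * s k - s k ^ 2 ≤ 2 * s (k + 1))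
    (hrec : ∀ k, e (k + 1) ≤ (1 - s k) ^ 2 * e k + s k ^ 2 * D) :
    ∀ k, e k ≤ 2 * D * s k := by
  intro k
  induction k with
  | zero => rw [he0]; exact mul_nonneg (by positivity) (hs 0).1
  | succ k ih =>
    calc e (k + 1) ≤ (1 - s k) ^ 2 * (2 * D * s k) + s k ^ 2 * D := (hrec k).trans (by gcongr)
      _ = D * (2 * s k - s k ^ 2) - 2 * D * s k ^ 2 * (1 - s k) := by ring
      _ ≤ D * (2 * s k - s k ^ 2) :=
          sub_le_self _ (mul_nonneg (by positivity) (sub_nonneg.2 (hs k).2))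
      _ ≤ 2 * D * s (k + 1) := by linarith [mul_le_mul_of_nonneg_left (hstep k) hD]

theorem averaged_noise_bound
    {d : ℕ} {Ω : Type*} {m0 : MeasurableSpace Ω} (μ : Measure Ω)
    [IsProbabilityMeasure μ] (ℱ : Filtration ℕ m0)
    (M' : ℕ → Ω → EuclideanSpace ℝ (Fin d))
    (hadapt : ∀ k, StronglyMeasurable[ℱ (k + 1)] (M' (k + 1)))
    (hint : ∀ k, Integrable (M' (k + 1)) μ)
    (hsq : ∀ k, Integrable (fun ω => ‖M' (k + 1) ω‖ ^ 2) μ)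
    (hmd : ∀ k, μ[M' (k + 1) | ℱ k] =ᵐ[μ] fun _ => 0)
    (D : ℝ)
    (hvar : ∀ k, ∀ᵐ ω ∂μ, (μ[fun ω' => ‖M' (k + 1) ω'‖ ^ 2 | ℱ k]) ω ≤ D)
    (β b K : ℝ) (hb0 : 0 < b) (hb1 : b < 1) (hβ0 : 0 < β) (hβ : β ≤ 1 / 2)
    (hK : K ≥ (2 * b / β) ^ ((1 : ℝ) / (1 - b)))
    (βs : ℕ → ℝ) (hβs : ∀ k : ℕ, βs k = β / ((k : ℝ) + K) ^ b)
    (U : ℕ → Ω → EuclideanSpace ℝ (Fin d))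
    (hU0 : U 0 = 0)
    (hUrec : ∀ k, U (k + 1) = fun ω => (1 - βs k) • U k ω + βs k • M' (k + 1) ω) :
    ∀ k, ∫ ω, ‖U k ω‖ ^ 2 ∂μ ≤ 2 * D * βs k := by
  have hM_sq : ∀ k, ∫ ω, ‖M' (k + 1) ω‖ ^ 2 ∂μ ≤ D := fun k =>
    integral_le_of_condExp_le (ℱ.le k) (hvar k)
  have hD : 0 ≤ D := (integral_nonneg fun ω => sq_nonneg _).trans (hM_sq 0)
  have hx : ∀ k : ℕ, (2 * b / β) ^ (1 / (1 - b)) ≤ (k : ℝ) + K := fun k => by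
    linarith [(k.cast_nonneg : (0 : ℝ) ≤ k)]
  have hU := stronglyMeasurable_and_integrable_norm_sq_of_averaging ℱ hadapt hsq hU0 hUrec
  refine le_two_mul_of_second_moment_recursion hD (by simp [hU0]) (fun k => ?_) (fun k => ?_)
    (fun k => ?_)
  · rw [hβs]; exact div_rpow_mem_Icc hb0 hb1 hβ0 hβ (hx k)
  · rw [hβs, hβs, Nat.cast_succ, add_right_comm]
    exact two_mul_div_rpow_sub_sq_le hb0 hb1 hβ0 (hx k)
  · rw [hUrec, integral_norm_sq_smul_add_smul (ℱ.le k) _ _ (hU k).1 (hU k).2 (hint k) (hsq k)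
      (hmd k)]
    gcongr
    exact hM_sq k
end
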